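/- (Estimator-based output-feedback closed-loop L2-gain bound.) Let Z be a real Hilbert space, X a linear subspace of Z, A : X → Z a linear map, B₁ : ℝ^r → Z, B₂ : ℝ^m → Z continuous linear maps, C₁ : X → ℝ^p, C₂ : X → ℝ^q, C₃ : X → ℝ^{p₁}, H : X → ℝ^m linear maps, and D₁ : ℝ^r → ℝ^p, D₂ : ℝ^r → ℝ^q, D₃ : ℝ^r → ℝ^{p₁} linear maps. Let P₁ : Z → Z be continuous, self-adjoint, coercive, map X into X with P₁(X) = X (so P₁⁻¹ exists, is continuous, coercive, self-adjoint, and maps X into X); suppose ε₁, γ₁ > 0 satisfy, for all h ∈ X, ω ∈ ℝ^r, υ ∈ ℝ^p: 2⟨A(P₁h) + B₂(Hh) + B₁ω, h⟩ − γ₁‖ω‖² − γ₁‖υ‖² + 2υᵀ(C₁(P₁h) + D₁ω) ≤ −ε₁‖h‖². Let P₂ : Z → Z be continuous, self-adjoint, coercive, 𝒵 : ℝ^q → Z continuous linear, L : ℝ^q → Z continuous linear with P₂(Lv) = 𝒵v for all v; suppose ε₂, γ₂ > 0 satisfy, for all e ∈ X, ω ∈ ℝ^r, υ ∈ ℝ^{p₁}: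 2⟨P₂(Ae) + 𝒵(C₂e), e⟩ − 2⟨P₂(B₁ω) + 𝒵(D₂ω), e⟩ − γ₂‖ω‖² − γ₂‖υ‖² + 2υᵀ(C₃e + D₃ω) ≤ −ε₂‖e‖². Suppose further there exists r > 0 such that for all h, e ∈ X: 2⟨B₂(H(P₁⁻¹e)), h⟩ ≤ ε₁‖h‖² + r·ε₂‖e‖². Let ω : [0,∞) → ℝ^r be continuous and x, e : [0,∞) → Z continuously differentiable with x(t), e(t) ∈ X for all t ≥ 0, x(0) = e(0) = 0, dx/dt(t) = A(x(t)) + B₂(H(P₁⁻¹x(t))) + B₂(H(P₁⁻¹e(t))) + B₁(ω(t)), and de/dt(t) = A(e(t)) + L(C₂(e(t))) − B₁(ω(t)) − L(D₂(ω(t))). Define z(t) = C₁(x(t)) + D₁(ω(t)) and z_e(t) = C₃(e(t)) + D₃(ω(t)) and assume both are continuous. Then for every T ≥ 0: ∫₀ᵀ ‖z(t)‖² dt ≤ γ₁(γ₁ + rγ₂) ∫₀ᵀ ‖ω(t)‖² dt and ∫₀ᵀ ‖z_e(t)‖² dt ≤ γ₂² ∫₀ᵀ ‖ω(t)‖² dt.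 -/

import Mathlib

/-!
With `V₁ x = ⟪x, P₁⁻¹ x⟫` and `V₂ e = ⟪e, P₂ e⟫`, the two operator inequalities, evaluated at
`h = P₁⁻¹ x` and at the worst-case outputs `υ = γ⁻¹ • z`, say that along the closed loop
`V̇₂ ≤ γ₂ ‖ω‖² - γ₂⁻¹ ‖z_e‖² - ε₂ ‖e‖²` and, after the coupling term is absorbed by the block
inequality, `V̇₁ ≤ γ₁ ‖ω‖² - γ₁⁻¹ ‖z‖² + r ε₂ ‖e‖²`. Hence `V₂` and `V₁ + r V₂` are storage
functions for the supply rates `γ₂ ‖ω‖² - γ₂⁻¹ ‖z_e‖²` and `(γ₁ + r γ₂) ‖ω‖² - γ₁⁻¹ ‖z‖²`;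
integrating from the zero initial state and using `V ≥ 0` gives both gain bounds.
-/

open RealInnerProductSpace MeasureTheory intervalIntegral Set

theorem add_inv_mul_norm_sq_le_of_forall_le {E : Type*} [NormedAddCommGroup E]
    [InnerProductSpace ℝ E] {a b γ : ℝ} (hγ : 0 < γ) {w : E}
    (h : ∀ υ : E, a - γ * ‖υ‖ ^ 2 + 2 * ⟪υ, w⟫ ≤ b) : a + γ⁻¹ * ‖w‖ ^ 2 ≤ b := by
  convert h (γ⁻¹ • w) using 1
  rw [real_inner_smul_left, real_inner_self_eq_norm_sq, norm_smul,
    Real.norm_of_nonneg (inv_nonneg.2 hγ.le)]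
  field_simp
  ring

section Dissipation

variable {Z : Type*} [NormedAddCommGroup Z] [InnerProductSpace ℝ Z]

theorem HasDerivAt.inner_apply_self {P : Z →L[ℝ] Z} (hP : ∀ x y, ⟪P x, y⟫ = ⟪x, P y⟫)
    {f : ℝ → Z} {f' : Z} {t : ℝ} (hf : HasDerivAt f f' t) :
    HasDerivAt (fun u => ⟪f u, P (f u)⟫) (2 * ⟪f', P (f t)⟫) t := by
  have hsymm : ⟪f t, P f'⟫ = ⟪f', P (f t)⟫ := by rw [real_inner_comm, hP]
  refine (hf.inner ℝ (P.hasFDerivAt.comp_hasDerivAt t hf)).congr_deriv ?_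
  rw [hsymm, Function.comp_apply]
  ring

variable {U W Y E : Type*} [NormedAddCommGroup U] [NormedSpace ℝ U] [NormedAddCommGroup W]
  [NormedSpace ℝ W] [NormedAddCommGroup Y] [NormedSpace ℝ Y] [NormedAddCommGroup E]
  [InnerProductSpace ℝ E]
  {X : Submodule ℝ Z}

theorem estimator_dissipation (A : X →ₗ[ℝ] Z) (B₁ : W →L[ℝ] Z) (C₂ : X →ₗ[ℝ] Y)
    (C₃ : X →ₗ[ℝ] E) (D₂ : W →ₗ[ℝ] Y) (D₃ : W →ₗ[ℝ] E) (P₂ : Z →L[ℝ] Z)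
    (hP₂ : ∀ x y, ⟪P₂ x, y⟫ = ⟪x, P₂ y⟫) (𝒵 L : Y →L[ℝ] Z) (hL : ∀ v, P₂ (L v) = 𝒵 v)
    {ε₂ γ₂ : ℝ} (hγ₂ : 0 < γ₂)
    (hdiss₂ : ∀ (e : X) (ω : W) (υ : E),
      2 * ⟪P₂ (A e) + 𝒵 (C₂ e), (e : Z)⟫ - 2 * ⟪P₂ (B₁ ω) + 𝒵 (D₂ ω), (e : Z)⟫
        - γ₂ * ‖ω‖ ^ 2 - γ₂ * ‖υ‖ ^ 2 + 2 * ⟪υ, C₃ e + D₃ ω⟫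
      ≤ -ε₂ * ‖(e : Z)‖ ^ 2)
    (e : X) (ω : W) :
    2 * ⟪A e + L (C₂ e) - B₁ ω - L (D₂ ω), P₂ e⟫
      ≤ γ₂ * ‖ω‖ ^ 2 - γ₂⁻¹ * ‖C₃ e + D₃ ω‖ ^ 2 - ε₂ * ‖(e : Z)‖ ^ 2 := by
  have h := add_inv_mul_norm_sq_le_of_forall_le hγ₂ (hdiss₂ e ω)
  rw [← hP₂]
  simp only [map_add, map_sub, hL, inner_add_left, inner_sub_left] at h ⊢
  linarith

theorem state_dissipation (A : X →ₗ[ℝ] Z) (B₁ : W →L[ℝ] Z) (B₂ : U →L[ℝ] Z)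
    (C₁ : X →ₗ[ℝ] E) (H : X →ₗ[ℝ] U) (D₁ : W →ₗ[ℝ] E)
    (P₁ Pinv : Z →L[ℝ] Z) (hP₁X : ∀ x ∈ X, P₁ x ∈ X) (hinv : ∀ x, P₁ (Pinv x) = x)
    {ε₁ γ₁ ε₂ r : ℝ} (hγ₁ : 0 < γ₁)
    (hdiss₁ : ∀ (h : X) (ω : W) (υ : E),
      2 * ⟪A ⟨P₁ (h : Z), hP₁X (h : Z) h.2⟩ + B₂ (H h) + B₁ ω, (h : Z)⟫
        - γ₁ * ‖ω‖ ^ 2 - γ₁ * ‖υ‖ ^ 2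
        + 2 * ⟪υ, C₁ ⟨P₁ (h : Z), hP₁X (h : Z) h.2⟩ + D₁ ω⟫
      ≤ -ε₁ * ‖(h : Z)‖ ^ 2)
    (hcross : ∀ (h e : X) (hme : Pinv (e : Z) ∈ X),
      2 * ⟪B₂ (H ⟨Pinv (e : Z), hme⟩), (h : Z)⟫ ≤ ε₁ * ‖(h : Z)‖ ^ 2 + r * ε₂ * ‖(e : Z)‖ ^ 2)
    (x e : X) (hx : Pinv (x : Z) ∈ X) (he : Pinv (e : Z) ∈ X) (ω : W) :
    2 * ⟪A x + B₂ (H ⟨Pinv x, hx⟩) + B₂ (H ⟨Pinv e, he⟩) + B₁ ω, Pinv x⟫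
      ≤ γ₁ * ‖ω‖ ^ 2 - γ₁⁻¹ * ‖C₁ x + D₁ ω‖ ^ 2 + r * ε₂ * ‖(e : Z)‖ ^ 2 := by
  have hP₁x : (⟨P₁ (Pinv x), hP₁X _ hx⟩ : X) = x := Subtype.ext (hinv x)
  have h₁ := add_inv_mul_norm_sq_le_of_forall_le hγ₁ (hdiss₁ ⟨Pinv x, hx⟩ ω)
  rw [hP₁x] at h₁
  have h₂ := hcross ⟨Pinv x, hx⟩ e he
  simp only [inner_add_left] at h₁ h₂ ⊢
  linarith

end Dissipation

theorem integral_norm_sq_le_of_hasDerivAt_le {E F : Type*} [NormedAddCommGroup E]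
    [NormedAddCommGroup F] {V : ℝ → ℝ} {u : ℝ → E} {y : ℝ → F} {α β T : ℝ} (hβ : 0 < β)
    (hT : 0 ≤ T) (hu : Continuous u) (hy : Continuous y) (hV₀ : V 0 = 0) (hVT : 0 ≤ V T)
    (hV : ∀ t ∈ Icc 0 T, ∃ v, HasDerivAt V v t ∧ v ≤ α * ‖u t‖ ^ 2 - β⁻¹ * ‖y t‖ ^ 2) :
    ∫ t in (0 : ℝ)..T, ‖y t‖ ^ 2 ≤ β * α * ∫ t in (0 : ℝ)..T, ‖u t‖ ^ 2 := by
  choose! V' hV' hV'le using hV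
  have hu2 : Continuous fun t => ‖u t‖ ^ 2 := by fun_prop
  have hy2 : Continuous fun t => ‖y t‖ ^ 2 := by fun_prop
  have hsupply := sub_le_integral_of_hasDeriv_right_of_le hT
    (fun t ht => (hV' t ht).continuousAt.continuousWithinAt)
    (fun t ht => (hV' t (Ioo_subset_Icc_self ht)).hasDerivWithinAt)
    (by fun_prop : Continuous fun t => α * ‖u t‖ ^ 2 - β⁻¹ * ‖y t‖ ^ 2).integrableOn_Icc
    (fun t ht => hV'le t (Ioo_subset_Icc_self ht))
  rw [integral_sub ((hu2.intervalIntegrable _ _).const_mul _)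
    ((hy2.intervalIntegrable _ _).const_mul _), intervalIntegral.integral_const_mul,
    intervalIntegral.integral_const_mul] at hsupply
  rw [mul_assoc, ← inv_mul_le_iff₀ hβ]
  linarith

theorem estimator_based_output_feedback_L2_gain_general
    {Z : Type*} [NormedAddCommGroup Z] [InnerProductSpace ℝ Z]
    (X : Submodule ℝ Z) {r m p q p₁ : ℕ}
    (A : X →ₗ[ℝ] Z)
    (B₁ : EuclideanSpace ℝ (Fin r) →L[ℝ] Z) (B₂ : EuclideanSpace ℝ (Fin m) →L[ℝ] Z)
    (C₁ : X →ₗ[ℝ] EuclideanSpace ℝ (Fin p)) (C₂ : X →ₗ[ℝ] EuclideanSpace ℝ (Fin q))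
    (C₃ : X →ₗ[ℝ] EuclideanSpace ℝ (Fin p₁)) (H : X →ₗ[ℝ] EuclideanSpace ℝ (Fin m))
    (D₁ : EuclideanSpace ℝ (Fin r) →ₗ[ℝ] EuclideanSpace ℝ (Fin p))
    (D₂ : EuclideanSpace ℝ (Fin r) →ₗ[ℝ] EuclideanSpace ℝ (Fin q))
    (D₃ : EuclideanSpace ℝ (Fin r) →ₗ[ℝ] EuclideanSpace ℝ (Fin p₁))
    -- P₁ : self-adjoint, coercive, maps X onto X, with continuous inverse Pinv
    (P₁ Pinv : Z →L[ℝ] Z)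
    (hP₁X : ∀ x ∈ X, P₁ x ∈ X)
    (hinv2 : ∀ x, P₁ (Pinv x) = x)
    (hPinvsa : ∀ x y : Z, ⟪Pinv x, y⟫ = ⟪x, Pinv y⟫)
    (hPinvcoer : ∃ δ > 0, ∀ x : Z, ⟪x, Pinv x⟫ ≥ δ * ‖x‖ ^ 2)
    (hPinvX : ∀ x ∈ X, Pinv x ∈ X)
    (ε₁ γ₁ : ℝ) (hγ₁ : 0 < γ₁)
    -- full-state feedback operator inequality
    (hdiss₁ : ∀ (h : X) (ω : EuclideanSpace ℝ (Fin r)) (υ : EuclideanSpace ℝ (Fin p)),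
      2 * ⟪A ⟨P₁ (h : Z), hP₁X (h : Z) h.2⟩ + B₂ (H h) + B₁ ω, (h : Z)⟫
        - γ₁ * ‖ω‖ ^ 2 - γ₁ * ‖υ‖ ^ 2
        + 2 * ⟪υ, C₁ ⟨P₁ (h : Z), hP₁X (h : Z) h.2⟩ + D₁ ω⟫
      ≤ -ε₁ * ‖(h : Z)‖ ^ 2)
    -- P₂ : self-adjoint, coercive; 𝒵 and L with P₂ ∘ L = 𝒵
    (P₂ : Z →L[ℝ] Z)
    (hP₂sa : ∀ x y : Z, ⟪P₂ x, y⟫ = ⟪x, P₂ y⟫)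
    (hP₂coer : ∃ ε > 0, ∀ x : Z, ⟪x, P₂ x⟫ ≥ ε * ‖x‖ ^ 2)
    (𝒵 : EuclideanSpace ℝ (Fin q) →L[ℝ] Z) (L : EuclideanSpace ℝ (Fin q) →L[ℝ] Z)
    (hL : ∀ v, P₂ (L v) = 𝒵 v)
    (ε₂ γ₂ : ℝ) (hε₂ : 0 < ε₂) (hγ₂ : 0 < γ₂)
    -- estimator operator inequality
    (hdiss₂ : ∀ (e : X) (ω : EuclideanSpace ℝ (Fin r)) (υ : EuclideanSpace ℝ (Fin p₁)),
      2 * ⟪P₂ (A e) + 𝒵 (C₂ e), (e : Z)⟫ - 2 * ⟪P₂ (B₁ ω) + 𝒵 (D₂ ω), (e : Z)⟫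
        - γ₂ * ‖ω‖ ^ 2 - γ₂ * ‖υ‖ ^ 2 + 2 * ⟪υ, C₃ e + D₃ ω⟫
      ≤ -ε₂ * ‖(e : Z)‖ ^ 2)
    -- negativity of the coupling block operator M
    (r' : ℝ) (hr' : 0 < r')
    (hcross : ∀ (h e : X) (hme : Pinv (e : Z) ∈ X),
      2 * ⟪B₂ (H ⟨Pinv (e : Z), hme⟩), (h : Z)⟫
        ≤ ε₁ * ‖(h : Z)‖ ^ 2 + r' * ε₂ * ‖(e : Z)‖ ^ 2)
    -- the closed-loop trajectory
    (ω : ℝ → EuclideanSpace ℝ (Fin r)) (hω : Continuous ω)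
    (x e : ℝ → Z)
    (hxX : ∀ t, 0 ≤ t → x t ∈ X) (heX : ∀ t, 0 ≤ t → e t ∈ X)
    (hx0 : x 0 = 0) (he0 : e 0 = 0)
    (hxdyn : ∀ t, 0 ≤ t → ∀ (hmx : x t ∈ X) (hme : e t ∈ X)
        (h1 : Pinv (x t) ∈ X) (h2 : Pinv (e t) ∈ X),
      HasDerivAt x
        (A ⟨x t, hmx⟩ + B₂ (H ⟨Pinv (x t), h1⟩) + B₂ (H ⟨Pinv (e t), h2⟩) + B₁ (ω t)) t)
    (hedyn : ∀ t, 0 ≤ t → ∀ (hme : e t ∈ X),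
      HasDerivAt e (A ⟨e t, hme⟩ + L (C₂ ⟨e t, hme⟩) - B₁ (ω t) - L (D₂ (ω t))) t)
    (z : ℝ → EuclideanSpace ℝ (Fin p)) (ze : ℝ → EuclideanSpace ℝ (Fin p₁))
    (hz : ∀ t, 0 ≤ t → ∀ (hmx : x t ∈ X), z t = C₁ ⟨x t, hmx⟩ + D₁ (ω t))
    (hze : ∀ t, 0 ≤ t → ∀ (hme : e t ∈ X), ze t = C₃ ⟨e t, hme⟩ + D₃ (ω t))
    (hzc : Continuous z) (hzec : Continuous ze) :
    ∀ T, 0 ≤ T →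
      ((∫ t in (0:ℝ)..T, ‖z t‖ ^ 2) ≤ γ₁ * (γ₁ + r' * γ₂) * ∫ t in (0:ℝ)..T, ‖ω t‖ ^ 2) ∧
      ((∫ t in (0:ℝ)..T, ‖ze t‖ ^ 2) ≤ γ₂ ^ 2 * ∫ t in (0:ℝ)..T, ‖ω t‖ ^ 2) := by
  intro T hT
  obtain ⟨δ, hδ, hV₁pos⟩ := hPinvcoer
  obtain ⟨κ, hκ, hV₂pos⟩ := hP₂coer
  have hV₁nn : 0 ≤ ⟪x T, Pinv (x T)⟫ := (by positivity : 0 ≤ δ * ‖x T‖ ^ 2).trans (hV₁pos _)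
  have hV₂nn : 0 ≤ ⟪e T, P₂ (e T)⟫ := (by positivity : 0 ≤ κ * ‖e T‖ ^ 2).trans (hV₂pos _)
  have hV₂ : ∀ t ∈ Icc 0 T, ∃ v, HasDerivAt (fun u => ⟪e u, P₂ (e u)⟫) v t ∧
      v ≤ γ₂ * ‖ω t‖ ^ 2 - γ₂⁻¹ * ‖ze t‖ ^ 2 - ε₂ * ‖e t‖ ^ 2 := by
    rintro t ⟨ht, -⟩
    refine ⟨_, (hedyn t ht (heX t ht)).inner_apply_self hP₂sa, ?_⟩
    rw [hze t ht (heX t ht)]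
    exact estimator_dissipation A B₁ C₂ C₃ D₂ D₃ P₂ hP₂sa 𝒵 L hL hγ₂ hdiss₂ _ _
  have hV₁ : ∀ t ∈ Icc 0 T, ∃ v, HasDerivAt (fun u => ⟪x u, Pinv (x u)⟫) v t ∧
      v ≤ γ₁ * ‖ω t‖ ^ 2 - γ₁⁻¹ * ‖z t‖ ^ 2 + r' * ε₂ * ‖e t‖ ^ 2 := by
    rintro t ⟨ht, -⟩
    have hmx := hxX t ht
    have hme := heX t ht
    refine ⟨_, (hxdyn t ht hmx hme (hPinvX _ hmx) (hPinvX _ hme)).inner_apply_self hPinvsa, ?_⟩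
    rw [hz t ht hmx]
    exact state_dissipation A B₁ B₂ C₁ H D₁ P₁ Pinv hP₁X hinv2 hγ₁ hdiss₁ hcross
      ⟨x t, hmx⟩ ⟨e t, hme⟩ _ _ _
  constructor
  · refine integral_norm_sq_le_of_hasDerivAt_le hγ₁ hT hω hzc
      (V := fun u => ⟪x u, Pinv (x u)⟫ + r' * ⟪e u, P₂ (e u)⟫) (by simp [hx0, he0])
      (by positivity) fun t ht => ?_
    obtain ⟨v₁, hv₁, hv₁le⟩ := hV₁ t ht
    obtain ⟨v₂, hv₂, hv₂le⟩ := hV₂ t ht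
    refine ⟨_, hv₁.add (hv₂.const_mul r'), ?_⟩
    have hze_nn : 0 ≤ r' * (γ₂⁻¹ * ‖ze t‖ ^ 2) := by positivity
    linarith [mul_le_mul_of_nonneg_left hv₂le hr'.le]
  · rw [sq γ₂]
    refine integral_norm_sq_le_of_hasDerivAt_le hγ₂ hT hω hzec
      (V := fun u => ⟪e u, P₂ (e u)⟫) (by simp [he0]) hV₂nn fun t ht => ?_
    obtain ⟨v, hv, hvle⟩ := hV₂ t ht
    exact ⟨v, hv, hvle.trans (sub_le_self _ (by positivity))⟩

/-- (Estimator-based output-feedback closed-loop L2-gain bound,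
Theorem 4 of the paper.) Combining the full-state feedback operator inequality, the
estimator operator inequality, and negativity of the coupling block operator, the
closed-loop system satisfies `‖z‖_{L2} ≤ √(γ₁(γ₁ + rγ₂)) ‖ω‖_{L2}` and
`‖z_e‖_{L2} ≤ γ₂ ‖ω‖_{L2}`. -/
theorem estimator_based_output_feedback_L2_gain
    {Z : Type*} [NormedAddCommGroup Z] [InnerProductSpace ℝ Z] [CompleteSpace Z]
    (X : Submodule ℝ Z) {r m p q p₁ : ℕ}
    (A : X →ₗ[ℝ] Z)
    (B₁ : EuclideanSpace ℝ (Fin r) →L[ℝ] Z) (B₂ : EuclideanSpace ℝ (Fin m) →L[ℝ] Z)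
    (C₁ : X →ₗ[ℝ] EuclideanSpace ℝ (Fin p)) (C₂ : X →ₗ[ℝ] EuclideanSpace ℝ (Fin q))
    (C₃ : X →ₗ[ℝ] EuclideanSpace ℝ (Fin p₁)) (H : X →ₗ[ℝ] EuclideanSpace ℝ (Fin m))
    (D₁ : EuclideanSpace ℝ (Fin r) →ₗ[ℝ] EuclideanSpace ℝ (Fin p))
    (D₂ : EuclideanSpace ℝ (Fin r) →ₗ[ℝ] EuclideanSpace ℝ (Fin q))
    (D₃ : EuclideanSpace ℝ (Fin r) →ₗ[ℝ] EuclideanSpace ℝ (Fin p₁))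
    -- P₁ : self-adjoint, coercive, maps X onto X, with continuous inverse Pinv
    (P₁ Pinv : Z →L[ℝ] Z)
    (hP₁sa : ∀ x y : Z, ⟪P₁ x, y⟫ = ⟪x, P₁ y⟫)
    (hP₁coer : ∃ ε > 0, ∀ x : Z, ⟪x, P₁ x⟫ ≥ ε * ‖x‖ ^ 2)
    (hP₁X : ∀ x ∈ X, P₁ x ∈ X)
    (hP₁img : ⇑P₁ '' (X : Set Z) = (X : Set Z))
    (hinv1 : ∀ x, Pinv (P₁ x) = x) (hinv2 : ∀ x, P₁ (Pinv x) = x)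
    (hPinvsa : ∀ x y : Z, ⟪Pinv x, y⟫ = ⟪x, Pinv y⟫)
    (hPinvcoer : ∃ δ > 0, ∀ x : Z, ⟪x, Pinv x⟫ ≥ δ * ‖x‖ ^ 2)
    (hPinvX : ∀ x ∈ X, Pinv x ∈ X)
    (ε₁ γ₁ : ℝ) (hε₁ : 0 < ε₁) (hγ₁ : 0 < γ₁)
    -- full-state feedback operator inequality
    (hdiss₁ : ∀ (h : X) (ω : EuclideanSpace ℝ (Fin r)) (υ : EuclideanSpace ℝ (Fin p)),
      2 * ⟪A ⟨P₁ (h : Z), hP₁X (h : Z) h.2⟩ + B₂ (H h) + B₁ ω, (h : Z)⟫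
        - γ₁ * ‖ω‖ ^ 2 - γ₁ * ‖υ‖ ^ 2
        + 2 * ⟪υ, C₁ ⟨P₁ (h : Z), hP₁X (h : Z) h.2⟩ + D₁ ω⟫
      ≤ -ε₁ * ‖(h : Z)‖ ^ 2)
    -- P₂ : self-adjoint, coercive; 𝒵 and L with P₂ ∘ L = 𝒵
    (P₂ : Z →L[ℝ] Z)
    (hP₂sa : ∀ x y : Z, ⟪P₂ x, y⟫ = ⟪x, P₂ y⟫)
    (hP₂coer : ∃ ε > 0, ∀ x : Z, ⟪x, P₂ x⟫ ≥ ε * ‖x‖ ^ 2)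
    (𝒵 : EuclideanSpace ℝ (Fin q) →L[ℝ] Z) (L : EuclideanSpace ℝ (Fin q) →L[ℝ] Z)
    (hL : ∀ v, P₂ (L v) = 𝒵 v)
    (ε₂ γ₂ : ℝ) (hε₂ : 0 < ε₂) (hγ₂ : 0 < γ₂)
    -- estimator operator inequality
    (hdiss₂ : ∀ (e : X) (ω : EuclideanSpace ℝ (Fin r)) (υ : EuclideanSpace ℝ (Fin p₁)),
      2 * ⟪P₂ (A e) + 𝒵 (C₂ e), (e : Z)⟫ - 2 * ⟪P₂ (B₁ ω) + 𝒵 (D₂ ω), (e : Z)⟫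
        - γ₂ * ‖ω‖ ^ 2 - γ₂ * ‖υ‖ ^ 2 + 2 * ⟪υ, C₃ e + D₃ ω⟫
      ≤ -ε₂ * ‖(e : Z)‖ ^ 2)
    -- negativity of the coupling block operator M
    (r' : ℝ) (hr' : 0 < r')
    (hcross : ∀ (h e : X) (hme : Pinv (e : Z) ∈ X),
      2 * ⟪B₂ (H ⟨Pinv (e : Z), hme⟩), (h : Z)⟫
        ≤ ε₁ * ‖(h : Z)‖ ^ 2 + r' * ε₂ * ‖(e : Z)‖ ^ 2)
    -- the closed-loop trajectory
    (ω : ℝ → EuclideanSpace ℝ (Fin r)) (hω : Continuous ω)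
    (x e : ℝ → Z)
    (hxX : ∀ t, 0 ≤ t → x t ∈ X) (heX : ∀ t, 0 ≤ t → e t ∈ X)
    (hx0 : x 0 = 0) (he0 : e 0 = 0)
    (hxdyn : ∀ t, 0 ≤ t → ∀ (hmx : x t ∈ X) (hme : e t ∈ X)
        (h1 : Pinv (x t) ∈ X) (h2 : Pinv (e t) ∈ X),
      HasDerivAt x
        (A ⟨x t, hmx⟩ + B₂ (H ⟨Pinv (x t), h1⟩) + B₂ (H ⟨Pinv (e t), h2⟩) + B₁ (ω t)) t)
    (hedyn : ∀ t, 0 ≤ t → ∀ (hme : e t ∈ X),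
      HasDerivAt e (A ⟨e t, hme⟩ + L (C₂ ⟨e t, hme⟩) - B₁ (ω t) - L (D₂ (ω t))) t)
    (z : ℝ → EuclideanSpace ℝ (Fin p)) (ze : ℝ → EuclideanSpace ℝ (Fin p₁))
    (hz : ∀ t, 0 ≤ t → ∀ (hmx : x t ∈ X), z t = C₁ ⟨x t, hmx⟩ + D₁ (ω t))
    (hze : ∀ t, 0 ≤ t → ∀ (hme : e t ∈ X), ze t = C₃ ⟨e t, hme⟩ + D₃ (ω t))
    (hzc : Continuous z) (hzec : Continuous ze) :
    ∀ T, 0 ≤ T →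
      ((∫ t in (0:ℝ)..T, ‖z t‖ ^ 2) ≤ γ₁ * (γ₁ + r' * γ₂) * ∫ t in (0:ℝ)..T, ‖ω t‖ ^ 2) ∧
      ((∫ t in (0:ℝ)..T, ‖ze t‖ ^ 2) ≤ γ₂ ^ 2 * ∫ t in (0:ℝ)..T, ‖ω t‖ ^ 2) :=
  estimator_based_output_feedback_L2_gain_general X A B₁ B₂ C₁ C₂ C₃ H D₁ D₂ D₃ P₁ Pinv hP₁X hinv2
    hPinvsa hPinvcoer hPinvX ε₁ γ₁ hγ₁ hdiss₁ P₂ hP₂sa hP₂coer 𝒵 L hL ε₂ γ₂ hε₂ hγ₂ hdiss₂ r' hr'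
    hcross ω hω x e hxX heX hx0 he0 hxdyn hedyn z ze hz hze hzc hzec
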